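/- arXiv:0810.3392 — 5 statements merged into one kernel-verified Lean document; each statement's English description precedes it below -/
import Mathlib

section
/- Let $V$ be a real vector space with a symmetric bilinear form $b$, and let $\alpha, \beta \in V$ satisfy $b(\alpha,\alpha) = b(\beta,\beta) = 1$. If the orthogonal reflections $\rho_\alpha$ and $\rho_\beta$ are distinct and $|b(\alpha,\beta)| \geq 1$, then the product $\rho_\alpha \rho_\beta$ has infinite order. -/
open Real

/-- The orthogonal reflection `ρ_v : x ↦ x - 2 b(x,v) v` associated to a vector `v`
with `b(v,v) = 1`, as a linear endomorphism. -/
noncomputable def orthoReflection {V : Type*} [AddCommGroup V] [Module ℝ V]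
    (b : LinearMap.BilinForm ℝ V) (v : V) : Module.End ℝ V :=
  LinearMap.id - LinearMap.smulRight ((2 : ℝ) • (b.flip v)) v

lemma orthoReflection_apply {V : Type*} [AddCommGroup V] [Module ℝ V]
    (b : LinearMap.BilinForm ℝ V) (v x : V) :
    orthoReflection b v x = x - (2 * b x v) • v := by
  simp [orthoReflection, smul_smul]

/-- If `ρ_α ≠ ρ_β` and `|b(α,β)| ≥ 1`, then `ρ_α ρ_β` has infinite order. -/
theorem orthoReflection_mul_infinite_order {V : Type*} [AddCommGroup V] [Module ℝ V]
    (b : LinearMap.BilinForm ℝ V) (hsymm : ∀ x y, b x y = b y x)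
    (α β : V) (hα : b α α = 1) (hβ : b β β = 1)
    (hne : orthoReflection b α ≠ orthoReflection b β)
    (hb : 1 ≤ |b α β|) :
    ¬ IsOfFinOrder (orthoReflection b α * orthoReflection b β) := by
  intro hfin
  set c : ℝ := b α β with hc
  set T : Module.End ℝ V := orthoReflection b α * orthoReflection b β with hT
  clear_value T
  clear_value c
  -- if α is a unit multiple of β, the reflections coincide
  have habeq : ∀ s : ℝ, α = s • β → False := by
    intro s h
    have hs2 : s * s = 1 := by
      have h1 : b α α = s * (s * b β β) := by rw [h]; simp
      rw [hα, hβ, mul_one] at h1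
      linarith [h1]
    apply hne
    ext x
    rw [orthoReflection_apply, orthoReflection_apply, h]
    rw [map_smul, smul_eq_mul]
    congr 1
    rw [smul_smul, show (2 * (s * b x β)) * s = (s*s) * (2 * b x β) by ring, hs2, one_mul]
  -- basic reflection values
  have hRββ : orthoReflection b β β = -β := by
    rw [orthoReflection_apply, hβ]; module
  have hRαα : orthoReflection b α α = -α := by
    rw [orthoReflection_apply, hα]; module
  have hRαβ : orthoReflection b α β = β - (2*c) • α := by
    rw [orthoReflection_apply, hsymm β α, ← hc]
  have hRβα : orthoReflection b β α = α - (2*c) • β := by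
    rw [orthoReflection_apply, ← hc]
  have hTβ : T β = (2*c) • α - β := by
    rw [hT, Module.End.mul_apply, hRββ, map_neg, hRαβ]; module
  have hTα : T α = (4*c^2-1) • α - (2*c) • β := by
    rw [hT, Module.End.mul_apply, hRβα, map_sub, map_smul, hRαα, hRαβ]
    match_scalars <;> ring
  obtain ⟨n, hn0, hTn⟩ := isOfFinOrder_iff_pow_eq_one.mp hfin
  rcases eq_or_lt_of_le hb with h1 | h1
  · -- parabolic case : |c| = 1
    have hc2 : c^2 = 1 := by rw [← sq_abs, ← h1]; norm_num
    set w : V := α - c • β with hw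
    clear_value w
    have hTw : T w = w := by
      rw [hw, map_sub, map_smul, hTα, hTβ]
      match_scalars
      · linear_combination 2 * hc2
      · ring
    have hTβ' : T β = β + (2*c) • w := by
      rw [hTβ, hw]
      match_scalars
      · ring
      · linear_combination 2 * hc2
    have hiter : ∀ m : ℕ, (T^m) β = β + ((2*c)*m) • w := by
      intro m
      induction m with
      | zero => simp
      | succ k ih =>
        rw [pow_succ', Module.End.mul_apply, ih, map_add, map_smul, hTβ', hTw]
        push_cast
        match_scalars <;> ring
    have := hiter n
    rw [hTn] at this
    simp only [Module.End.one_apply] at this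
    have hzero : ((2*c)*(n:ℝ)) • w = 0 := by
      have := this.symm
      rwa [add_eq_left] at this
    have hcoeff : (2*c)*(n:ℝ) ≠ 0 := by
      have hcne : c ≠ 0 := by intro h; rw [h] at hc2; norm_num at hc2
      have : (n:ℝ) ≠ 0 := Nat.cast_ne_zero.mpr hn0.ne'
      positivity
    have hw0 : w = 0 := by
      rcases smul_eq_zero.mp hzero with h | h
      · exact absurd h hcoeff
      · exact h
    exact habeq c (by rwa [hw, sub_eq_zero] at hw0)
  · -- hyperbolic case : |c| > 1
    have hc2 : 1 < c^2 := by
      have := sq_abs c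
      nlinarith
    set d : ℝ := Real.sqrt (c^2 - 1) with hd
    have hd2 : d^2 = c^2 - 1 := Real.sq_sqrt (by linarith)
    have hd0 : 0 < d := Real.sqrt_pos.mpr (by linarith)
    set lam : ℝ := 2*c^2 - 1 + 2 * |c| * d with hlam
    have habs : |c|^2 = c^2 := sq_abs c
    have habs0 : 0 < |c| := by positivity
    have hlam1 : 1 < lam := by
      have : 0 < 2 * |c| * d := by positivity
      nlinarith
    have hchar : lam^2 = (4*c^2-2)*lam - 1 := by
      rw [hlam]
      nlinarith [habs, hd2]
    clear_value d lam
    set e : V := (2*c) • α + (lam+1-4*c^2) • β with he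
    clear_value e
    have hTe : T e = lam • e := by
      rw [he, map_add, map_smul, map_smul, hTα, hTβ]
      match_scalars
      · ring
      · linear_combination -hchar
    have hpow : ∀ m : ℕ, (T^m) e = lam^m • e := by
      intro m
      induction m with
      | zero => simp
      | succ k ih =>
        rw [pow_succ', Module.End.mul_apply, ih, map_smul, hTe, smul_smul, ← pow_succ]
    have := hpow n
    rw [hTn] at this
    simp only [Module.End.one_apply] at this
    have he0 : e = 0 := by
      have hlamn : 1 < lam^n := one_lt_pow₀ hlam1 hn0.ne'
      have h2 : (lam^n - 1) • e = 0 := by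
        rw [sub_smul, one_smul, ← this, sub_self]
      rcases smul_eq_zero.mp h2 with h | h
      · exact absurd h (by linarith)
      · exact h
    have h2c : (2*c) ≠ 0 := by
      have : c ≠ 0 := by intro h; rw [h] at hc2; norm_num at hc2
      simpa using this
    have hαβ : α = ((4*c^2-1-lam)/(2*c)) • β := by
      have h3 : (2*c) • α = (4*c^2-1-lam) • β := by
        have h4 : (2*c) • α = -((lam+1-4*c^2) • β) := by
          rw [eq_neg_iff_add_eq_zero, ← he, he0]
        rw [h4]; match_scalars <;> ring
      calc α = ((2*c)⁻¹ * (2*c)) • α := by rw [inv_mul_cancel₀ h2c, one_smul]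
      _ = (2*c)⁻¹ • ((2*c) • α) := by rw [smul_smul]
      _ = ((4*c^2-1-lam)/(2*c)) • β := by rw [h3, smul_smul]; congr 1; field_simp
    exact habeq _ hαβ
end

section
/- Let $(W,R)$ be a Coxeter system acting on $V = \mathbb{R}^R$ via its geometric representation, with root system $\Phi = \{w(e_r) \mid w \in W, r \in R\}$. Then for every $\alpha \in \Phi$, either all coordinates of $\alpha$ (with respect to the canonical basis $(e_r)_{r \in R}$) are nonnegative, or all coordinates of $\alpha$ are nonpositive. -/
open Real

/-! ### Auxiliary trigonometric coefficient functions -/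

/-- Coefficient function: `t ↦ sin(tπ/m)/sin(π/m)` for `m ≠ 0`, and `t ↦ t` for `m = 0`. -/
noncomputable def rootCoeff (m : ℕ) (t : ℕ) : ℝ :=
  if m = 0 then (t : ℝ) else Real.sin ((t : ℝ) * (Real.pi / m)) / Real.sin (Real.pi / m)

/-- `cos(π/m)` for `m ≠ 0`, and `1` for `m = 0`. -/
noncomputable def rootCos (m : ℕ) : ℝ :=
  if m = 0 then 1 else Real.cos (Real.pi / m)

lemma rootCoeff_zero (m : ℕ) : rootCoeff m 0 = 0 := by
  unfold rootCoeff
  split <;> simp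

lemma rootCoeff_one {m : ℕ} (hm : m ≠ 1) : rootCoeff m 1 = 1 := by
  unfold rootCoeff
  split
  · simp
  · rename_i h
    rw [Nat.cast_one, one_mul, div_self]
    have h2 : 2 ≤ m := by omega
    have hpos : 0 < Real.pi / m := by positivity
    have hlt : Real.pi / m < Real.pi :=
      div_lt_self Real.pi_pos (by exact_mod_cast (by omega : 1 < m))
    exact ne_of_gt (Real.sin_pos_of_pos_of_lt_pi hpos hlt)

lemma rootCoeff_rec (m : ℕ) (t : ℕ) :
    rootCoeff m (t + 2) = 2 * rootCos m * rootCoeff m (t + 1) - rootCoeff m t := by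
  unfold rootCoeff rootCos
  split
  · push_cast; ring
  · have h1 : ((t : ℝ) + 2) * (Real.pi / m) = ((t:ℝ)+1) * (Real.pi / m) + Real.pi / m := by ring
    have h2 : (t : ℝ) * (Real.pi / m) = ((t:ℝ)+1) * (Real.pi / m) - Real.pi / m := by ring
    push_cast
    rw [h1, h2, Real.sin_add, Real.sin_sub]
    ring

lemma rootCoeff_nonneg {m t : ℕ} (ht : t ≤ m ∨ m = 0) : 0 ≤ rootCoeff m t := by
  unfold rootCoeff
  split
  · positivity
  · rename_i h
    have ht' : t ≤ m := ht.resolve_right h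
    have hm1 : (1:ℝ) ≤ (m:ℝ) := by exact_mod_cast Nat.one_le_iff_ne_zero.mpr h
    have hpi := Real.pi_pos
    apply div_nonneg
    · apply Real.sin_nonneg_of_nonneg_of_le_pi
      · positivity
      · calc (t:ℝ) * (Real.pi / m) ≤ (m:ℝ) * (Real.pi / m) := by
              apply mul_le_mul_of_nonneg_right (by exact_mod_cast ht') (by positivity)
          _ = Real.pi := by field_simp
    · apply Real.sin_nonneg_of_nonneg_of_le_pi
      · positivity
      · rw [div_le_iff₀ (by linarith)]
        nlinarith

/-! ### Reduced words over two letters are alternating -/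

lemma chain'_ne_of_isReduced {B : Type*} {W : Type*} [Group W]
    {M : CoxeterMatrix B} (cs : CoxeterSystem M W) :
    ∀ (ω : List B), cs.IsReduced ω → List.Chain' (· ≠ ·) ω := by
  intro ω
  induction ω with
  | nil => intro _; simp [List.Chain']
  | cons a rest ih =>
    intro hred
    have hrest : cs.IsReduced rest := by
      have := hred.drop 1
      simpa using this
    match rest, hrest, ih with
    | [], _, _ => simp [List.Chain']
    | b :: t, hrest, ih =>
      rw [List.Chain', List.isChain_cons_cons]
      refine ⟨?_, ih hrest⟩
      intro hab
      subst hab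
      have : cs.wordProd (a :: a :: t) = cs.wordProd t := by
        rw [cs.wordProd_cons, cs.wordProd_cons, ← mul_assoc, cs.simple_mul_simple_self, one_mul]
      have hle : cs.length (cs.wordProd (a :: a :: t)) ≤ t.length := by
        rw [this]; exact cs.length_wordProd_le t
      have : cs.length (cs.wordProd (a :: a :: t)) = (a :: a :: t).length := hred
      simp [this] at hle

lemma eq_alternatingWord_of_chain' {B : Type*} {i j : B} (hij : i ≠ j) :
    ∀ (ω : List B), (∀ a ∈ ω, a = i ∨ a = j) → List.Chain' (· ≠ ·) ω →
      ω = CoxeterSystem.alternatingWord i j ω.length ∨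
      ω = CoxeterSystem.alternatingWord j i ω.length := by
  intro ω
  induction ω with
  | nil => intro _ _; left; rfl
  | cons a rest ih =>
    intro hmem hch
    have hrest := ih (fun x hx => hmem x (List.mem_cons_of_mem a hx)) hch.tail
    have ha : a = i ∨ a = j := hmem a List.mem_cons_self
    match rest, hrest, hch with
    | [], _, _ =>
      rcases ha with rfl | rfl
      · right
        simp [CoxeterSystem.alternatingWord]
      · left
        simp [CoxeterSystem.alternatingWord]
    | b :: t, hrest, hch =>
      have hab : a ≠ b := (List.isChain_cons_cons.mp hch).1
      have hb : b = i ∨ b = j := hmem b (by simp)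
      rcases hrest with h | h
      · have hlen : (b :: t).length = t.length + 1 := rfl
        rw [hlen] at h
        have hbval : b = if Even t.length then j else i := by
          have := congrArg List.head? h
          rw [CoxeterSystem.alternatingWord_succ'] at this
          simpa using this
        have haval : a = if Even (t.length + 1) then j else i := by
          rcases Nat.even_or_odd t.length with he | ho
          · simp only [he, if_pos] at hbval
            have hne : a ≠ j := hbval ▸ hab
            simp [Nat.even_add_one, he, ha.resolve_right hne]
          · have hne : ¬ Even t.length := Nat.not_even_iff_odd.mpr ho
            simp only [hne, if_neg, if_false] at hbval
            have hne' : a ≠ i := hbval ▸ hab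
            simp [Nat.even_add_one, hne, ha.resolve_left hne']
        left
        simp only [List.length_cons]
        rw [CoxeterSystem.alternatingWord_succ', ← h, ← haval]
      · have hlen : (b :: t).length = t.length + 1 := rfl
        rw [hlen] at h
        have hbval : b = if Even t.length then i else j := by
          have := congrArg List.head? h
          rw [CoxeterSystem.alternatingWord_succ'] at this
          simpa using this
        have haval : a = if Even (t.length + 1) then i else j := by
          rcases Nat.even_or_odd t.length with he | ho
          · simp only [he, if_pos] at hbval
            have hne : a ≠ i := hbval ▸ hab
            simp [Nat.even_add_one, he, ha.resolve_left hne]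
          · have hne : ¬ Even t.length := Nat.not_even_iff_odd.mpr ho
            simp only [hne, if_neg, if_false] at hbval
            have hne' : a ≠ j := hbval ▸ hab
            simp [Nat.even_add_one, hne, ha.resolve_right hne']
        right
        simp only [List.length_cons]
        rw [CoxeterSystem.alternatingWord_succ', ← h, ← haval]


lemma linEquiv_mul_apply {B : Type*} (e f : (B → ℝ) ≃ₗ[ℝ] (B → ℝ)) (x : B → ℝ) :
    (e * f) x = e (f x) := rfl

/-- The dihedral coefficient computation: applying an alternating word to `e_i`. -/
lemma alt_apply {B : Type*} [DecidableEq B] {W : Type*} [Group W]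
    {M : CoxeterMatrix B} (cs : CoxeterSystem M W)
    (bf : LinearMap.BilinForm ℝ (B → ℝ))
    (hbf : ∀ i j : B, bf (Pi.single i 1) (Pi.single j 1) =
      if M i j = 0 then -1 else -Real.cos (Real.pi / (M i j : ℝ)))
    (ρ : W →* ((B → ℝ) ≃ₗ[ℝ] (B → ℝ)))
    (hρ : ∀ (i : B) (x : B → ℝ),
      ρ (cs.simple i) x = x - (2 * bf x (Pi.single i 1)) • (Pi.single i 1 : B → ℝ))
    {i j : B} (hij : i ≠ j) (k : ℕ) :
    ρ (cs.wordProd (CoxeterSystem.alternatingWord i j k)) (Pi.single i 1) =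
      (if Even k then rootCoeff (M i j) (k+1) else rootCoeff (M i j) k) •
        (Pi.single i 1 : B → ℝ) +
      (if Even k then rootCoeff (M i j) k else rootCoeff (M i j) (k+1)) •
        (Pi.single j 1 : B → ℝ) := by
  have hm1 : M i j ≠ 1 := M.off_diagonal i j hij
  have hii : bf (Pi.single i 1) (Pi.single i 1) = 1 := by
    rw [hbf i i, M.diagonal i]
    norm_num
  have hjj : bf (Pi.single j 1) (Pi.single j 1) = 1 := by
    rw [hbf j j, M.diagonal j]
    norm_num
  have hijv : bf (Pi.single i 1) (Pi.single j 1) = -(rootCos (M i j)) := by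
    rw [hbf i j]
    unfold rootCos
    split <;> simp
  have hjiv : bf (Pi.single j 1) (Pi.single i 1) = -(rootCos (M i j)) := by
    rw [hbf j i, M.symmetric j i]
    unfold rootCos
    split <;> simp
  induction k with
  | zero =>
    simp only [CoxeterSystem.alternatingWord, cs.wordProd_nil, map_one]
    rw [rootCoeff_zero, rootCoeff_one hm1]
    simp
  | succ k ih =>
    rw [CoxeterSystem.alternatingWord_succ', cs.wordProd_cons, map_mul, linEquiv_mul_apply, ih]
    rcases Nat.even_or_odd k with he | ho
    · have hne : ¬ Even (k + 1) := by simp [Nat.even_add_one, he]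
      simp only [he, if_pos, hne, if_neg, if_false]
      rw [hρ j]
      rw [map_add, map_smul, map_smul, LinearMap.add_apply, LinearMap.smul_apply,
        LinearMap.smul_apply, hijv, hjj, smul_eq_mul, smul_eq_mul]
      rw [show k + 1 + 1 = k + 2 from rfl, rootCoeff_rec (M i j) k]
      module
    · have hne : ¬ Even k := Nat.not_even_iff_odd.mpr ho
      have he1 : Even (k + 1) := by simp [Nat.even_add_one, hne]
      simp only [hne, if_neg, if_false, he1, if_pos]
      rw [hρ i]
      rw [map_add, map_smul, map_smul, LinearMap.add_apply, LinearMap.smul_apply,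
        LinearMap.smul_apply, hii, hjiv, smul_eq_mul, smul_eq_mul]
      rw [show k + 1 + 1 = k + 2 from rfl, rootCoeff_rec (M i j) k]
      module


/-- Key lemma: if `ℓ(w sᵢ) > ℓ(w)`, then all coordinates of `w(eᵢ)` are nonnegative. -/
theorem pos_of_not_rightDescent {B : Type*} [DecidableEq B] {W : Type*} [Group W]
    {M : CoxeterMatrix B} (cs : CoxeterSystem M W)
    (bf : LinearMap.BilinForm ℝ (B → ℝ))
    (hbf : ∀ i j : B, bf (Pi.single i 1) (Pi.single j 1) =
      if M i j = 0 then -1 else -Real.cos (Real.pi / (M i j : ℝ)))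
    (ρ : W →* ((B → ℝ) ≃ₗ[ℝ] (B → ℝ)))
    (hρ : ∀ (i : B) (x : B → ℝ),
      ρ (cs.simple i) x = x - (2 * bf x (Pi.single i 1)) • (Pi.single i 1 : B → ℝ)) :
    ∀ (n : ℕ) (w : W) (i : B), cs.length w = n →
      cs.length w < cs.length (w * cs.simple i) →
      ∀ l : B, 0 ≤ ρ w (Pi.single i 1) l := by
  intro n
  induction n using Nat.strong_induction_on with
  | _ n ih =>
  classical
  intro w i hn hlt l
  by_cases hw : w = 1
  · subst hw
    rw [map_one]
    have h1 : (0:ℝ) ≤ (Pi.single i 1 : B → ℝ) l := by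
      rw [Pi.single_apply]
      split <;> norm_num
    exact h1
  · obtain ⟨j, hj⟩ := cs.exists_rightDescent_of_ne_one hw
    unfold CoxeterSystem.IsRightDescent at hj
    have hij : i ≠ j := by
      rintro rfl
      omega
    have hwj : cs.length (w * cs.simple j) + 1 = cs.length w :=
      (cs.length_mul_simple w j).resolve_left (by omega)
    have hwsi : cs.length (w * cs.simple i) = cs.length w + 1 :=
      (cs.length_mul_simple w i).resolve_right (by omega)
    -- the set of lengths of `u` appearing in decompositions `w = u · (word in i,j)`
    have hex : ∃ nu : ℕ, ∃ u : W, ∃ ω : List B, cs.length u = nu ∧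
        (∀ a ∈ ω, a = i ∨ a = j) ∧ w = u * cs.wordProd ω ∧
        cs.length w = cs.length u + ω.length := by
      refine ⟨cs.length (w * cs.simple j), w * cs.simple j, [j], rfl, by simp, ?_, ?_⟩
      · rw [cs.wordProd_singleton, cs.simple_mul_simple_cancel_right]
      · simp only [List.length_singleton]
        omega
    obtain ⟨u, ω, hu_len, hω_mem, hdecomp, hlen_sum⟩ := Nat.find_spec hex
    have min_u : ∀ (u' : W) (ω' : List B), (∀ a ∈ ω', a = i ∨ a = j) →
        w = u' * cs.wordProd ω' → cs.length w = cs.length u' + ω'.length →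
        cs.length u ≤ cs.length u' := by
      intro u' ω' h1 h2 h3
      by_contra hc
      push_neg at hc
      rw [hu_len] at hc
      exact Nat.find_min hex hc ⟨u', ω', rfl, h1, h2, h3⟩
    -- u is not a right descent for either i or j
    have hui : cs.length u < cs.length (u * cs.simple i) := by
      rcases cs.length_mul_simple u i with h | h
      · omega
      · exfalso
        have hd : w = (u * cs.simple i) * cs.wordProd (i :: ω) := by
          rw [cs.wordProd_cons, mul_assoc, cs.simple_mul_simple_cancel_left, hdecomp]
        have hl : cs.length w = cs.length (u * cs.simple i) + (i :: ω).length := by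
          simp only [List.length_cons]
          omega
        have := min_u (u * cs.simple i) (i :: ω)
          (by intro a ha
              rcases List.mem_cons.mp ha with rfl | ha
              · left; rfl
              · exact hω_mem a ha) hd hl
        omega
    have huj : cs.length u < cs.length (u * cs.simple j) := by
      rcases cs.length_mul_simple u j with h | h
      · omega
      · exfalso
        have hd : w = (u * cs.simple j) * cs.wordProd (j :: ω) := by
          rw [cs.wordProd_cons, mul_assoc, cs.simple_mul_simple_cancel_left, hdecomp]
        have hl : cs.length w = cs.length (u * cs.simple j) + (j :: ω).length := by
          simp only [List.length_cons]
          omega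
        have := min_u (u * cs.simple j) (j :: ω)
          (by intro a ha
              rcases List.mem_cons.mp ha with rfl | ha
              · right; rfl
              · exact hω_mem a ha) hd hl
        omega
    have hu_lt : cs.length u < n := by
      have := min_u (w * cs.simple j) [j]
        (by simp)
        (by rw [cs.wordProd_singleton, cs.simple_mul_simple_cancel_right])
        (by simp only [List.length_singleton]; omega)
      omega
    -- `ω ++ [i]` is reduced
    have hred : cs.IsReduced (ω ++ [i]) := by
      have h1 : w * cs.simple i = u * cs.wordProd (ω ++ [i]) := by
        rw [cs.wordProd_append, cs.wordProd_singleton, ← mul_assoc, ← hdecomp]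
      have h2 : cs.length (w * cs.simple i) ≤
          cs.length u + cs.length (cs.wordProd (ω ++ [i])) := by
        rw [h1]
        exact cs.length_mul_le u (cs.wordProd (ω ++ [i]))
      have h3 : cs.length (cs.wordProd (ω ++ [i])) ≤ ω.length + 1 := by
        simpa using cs.length_wordProd_le (ω ++ [i])
      unfold CoxeterSystem.IsReduced
      simp only [List.length_append, List.length_singleton]
      omega
    have hchain := chain'_ne_of_isReduced cs _ hred
    have hmem' : ∀ a ∈ ω ++ [i], a = i ∨ a = j := by
      intro a ha
      rcases List.mem_append.mp ha with h | h
      · exact hω_mem a h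
      · left; simpa using h
    rcases eq_alternatingWord_of_chain' hij _ hmem' hchain with halt | halt
    · -- impossible: that word ends in j
      exfalso
      rw [List.length_append, List.length_singleton,
        CoxeterSystem.alternatingWord_succ, List.concat_eq_append] at halt
      have := (List.append_inj' halt rfl).2
      simp only [List.cons.injEq] at this
      exact hij this.1
    · rw [List.length_append, List.length_singleton] at halt
      have hredalt : cs.IsReduced (CoxeterSystem.alternatingWord j i (ω.length + 1)) :=
        halt ▸ hred
      have hω_alt : ω = CoxeterSystem.alternatingWord i j ω.length := by
        rw [CoxeterSystem.alternatingWord_succ, List.concat_eq_append] at halt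
        exact (List.append_inj' halt rfl).1
      have hk : M i j ≠ 0 → ω.length + 1 ≤ M i j := by
        intro hm0
        by_contra hc
        push_neg at hc
        rw [M.symmetric i j] at hc hm0
        exact cs.not_isReduced_alternatingWord j i hm0 hc hredalt
      have hA : 0 ≤ rootCoeff (M i j) (ω.length + 1) := by
        apply rootCoeff_nonneg
        rcases eq_or_ne (M i j) 0 with h | h
        · right; exact h
        · left; exact hk h
      have hB : 0 ≤ rootCoeff (M i j) ω.length := by
        apply rootCoeff_nonneg
        rcases eq_or_ne (M i j) 0 with h | h
        · right; exact h
        · left; omega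
      have hposi := ih (cs.length u) hu_lt u i rfl hui
      have hposj := ih (cs.length u) hu_lt u j rfl huj
      have key : ρ w (Pi.single i 1) =
          (if Even ω.length then rootCoeff (M i j) (ω.length+1) else rootCoeff (M i j) ω.length) •
            (ρ u (Pi.single i 1)) +
          (if Even ω.length then rootCoeff (M i j) ω.length else rootCoeff (M i j) (ω.length+1)) •
            (ρ u (Pi.single j 1)) := by
        rw [hdecomp, map_mul, linEquiv_mul_apply]
        conv_lhs => rw [hω_alt]
        rw [alt_apply cs bf hbf ρ hρ hij ω.length, map_add, map_smul, map_smul]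
      rw [key]
      simp only [Pi.add_apply, Pi.smul_apply, smul_eq_mul]
      split_ifs with h
      · exact add_nonneg (mul_nonneg hA (hposi l)) (mul_nonneg hB (hposj l))
      · exact add_nonneg (mul_nonneg hB (hposi l)) (mul_nonneg hA (hposj l))

/-- Let `(W,R)` be a Coxeter system (of finite rank, indexed by `B`),
acting on `V = ℝ^B` via the geometric representation `ρ`, with bilinear form `bf`
satisfying `bf(e_i, e_j) = -cos(π / m_{ij})` (`-1` if `m_{ij} = ∞`, encoded as `0`).
Then every root `w(e_i)` has all coordinates nonnegative or all coordinates nonpositive. -/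
theorem roots_pos_or_neg {B : Type*} [Fintype B] [DecidableEq B] {W : Type*} [Group W]
    {M : CoxeterMatrix B} (cs : CoxeterSystem M W)
    (bf : LinearMap.BilinForm ℝ (B → ℝ))
    (hbf : ∀ i j : B, bf (Pi.single i 1) (Pi.single j 1) =
      if M i j = 0 then -1 else -Real.cos (Real.pi / (M i j : ℝ)))
    (hsymm : ∀ x y, bf x y = bf y x)
    (ρ : W →* ((B → ℝ) ≃ₗ[ℝ] (B → ℝ)))
    (hρ : ∀ (i : B) (x : B → ℝ),
      ρ (cs.simple i) x = x - (2 * bf x (Pi.single i 1)) • (Pi.single i 1 : B → ℝ)) :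
    ∀ (w : W) (i : B),
      (∀ j : B, 0 ≤ ρ w (Pi.single i 1) j) ∨ (∀ j : B, ρ w (Pi.single i 1) j ≤ 0) := by
  intro w i
  rcases cs.length_mul_simple w i with h | h
  · left
    exact pos_of_not_rightDescent cs bf hbf ρ hρ (cs.length w) w i rfl (by omega)
  · right
    have hw'' : (w * cs.simple i) * cs.simple i = w := cs.simple_mul_simple_cancel_right i
    have hpos := pos_of_not_rightDescent cs bf hbf ρ hρ (cs.length (w * cs.simple i))
      (w * cs.simple i) i rfl (by rw [hw'']; omega)
    intro l
    have hii : bf (Pi.single i 1) (Pi.single i 1) = 1 := by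
      rw [hbf i i, M.diagonal i]
      norm_num
    have hsii : ρ (cs.simple i) (Pi.single i 1) = -(Pi.single i 1 : B → ℝ) := by
      rw [hρ i, hii]
      module
    have hkey : ρ w (Pi.single i 1) = - ρ (w * cs.simple i) (Pi.single i 1) := by
      conv_lhs => rw [← hw'']
      rw [map_mul, linEquiv_mul_apply, hsii, map_neg]
    rw [hkey]
    simp only [Pi.neg_apply]
    linarith [hpos l]
end

section
/- Let $(W,S)$ be a Coxeter system of type $H_3$ with $S = \{r,s,t\}$, $o(rs)=5$, $o(st)=3$, $o(rt)=2$. Define $\delta \colon S \to W$ by $\delta(r) = rsr$, $\delta(s) = s$, $\delta(t) = \omega t \omega^{-1}$ where $\omega = tsrtst$. Then $\delta$ extends to an automorphism of $W$; in particular $\{rsr, s, \omega t \omega^{-1}\}$ is a Coxeter generating set of $W$ of type $H_3$. -/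
/-- Let `(W,S)` be a Coxeter system of type `H₃`, `S = {r,s,t}` with
`o(rs) = 5`, `o(st) = 3`, `o(rt) = 2`. The map `δ : r ↦ rsr, s ↦ s, t ↦ ωtω⁻¹`
(where `ω = tsrtst`) extends to an automorphism of `W`; in particular
`{rsr, s, ωtω⁻¹}` is a Coxeter generating set of `W` of type `H₃`. -/
theorem H3_delta_extends_to_automorphism {W : Type*} [Group W]
    (cs : CoxeterSystem CoxeterMatrix.H₃ W)
    (r s t : W) (hr : r = cs.simple 2) (hs : s = cs.simple 1) (ht : t = cs.simple 0)
    (ω : W) (hω : ω = t * s * r * t * s * t) :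
    (∃ φ : W ≃* W, φ r = r * s * r ∧ φ s = s ∧ φ t = ω * t * ω⁻¹) ∧
    (∃ cs' : CoxeterSystem CoxeterMatrix.H₃ W,
      cs'.simple 2 = r * s * r ∧ cs'.simple 1 = s ∧ cs'.simple 0 = ω * t * ω⁻¹) := by
  -- basic relations
  have htt : t * t = 1 := by rw [ht]; exact cs.simple_mul_simple_self 0
  have hss : s * s = 1 := by rw [hs]; exact cs.simple_mul_simple_self 1
  have hrr : r * r = 1 := by rw [hr]; exact cs.simple_mul_simple_self 2
  have htinv : t⁻¹ = t := inv_eq_of_mul_eq_one_right htt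
  have hsinv : s⁻¹ = s := inv_eq_of_mul_eq_one_right hss
  have hrinv : r⁻¹ = r := inv_eq_of_mul_eq_one_right hrr
  have hts3 : (t * s) ^ 3 = 1 := by
    have h := cs.simple_mul_simple_pow 0 1
    rw [show CoxeterMatrix.H₃ 0 1 = 3 from rfl, ← ht, ← hs] at h
    exact h
  have hsr5 : (s * r) ^ 5 = 1 := by
    have h := cs.simple_mul_simple_pow 1 2
    rw [show CoxeterMatrix.H₃ 1 2 = 5 from rfl, ← hs, ← hr] at h
    exact h
  have htr2 : (t * r) ^ 2 = 1 := by
    have h := cs.simple_mul_simple_pow 0 2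
    rw [show CoxeterMatrix.H₃ 0 2 = 2 from rfl, ← ht, ← hr] at h
    exact h
  have hswap : ∀ (a b : W) (n : ℕ), (a * b) ^ n = 1 → (b * a) ^ n = 1 := by
    intro a b n h
    have hsc : a * (b * a) ^ n = (a * b) ^ n * a :=
      (SemiconjBy.pow_right (show SemiconjBy a (b * a) (a * b) from (mul_assoc a b a).symm) n)
    rw [h, one_mul] at hsc
    exact mul_left_cancel (show a * (b * a) ^ n = a * 1 by rw [hsc, mul_one])
  have hrs5 : (r * s) ^ 5 = 1 := hswap s r 5 hsr5
  have hst3 : (s * t) ^ 3 = 1 := hswap t s 3 hts3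
  have hrt2 : (r * t) ^ 2 = 1 := hswap t r 2 htr2
  -- commutation of r and t
  have hcomm : t * r = r * t := by
    have h1 : (r * t)⁻¹ = r * t := inv_eq_of_mul_eq_one_right (by rw [← sq]; exact hrt2)
    calc t * r = (r * t)⁻¹ := by rw [mul_inv_rev, htinv, hrinv]
    _ = r * t := h1
  -- braid relation for s,t
  have hsts : s * t * s = t * s * t := by
    have e : (s * t * s) * (t * s * t) = 1 := by rw [← hst3]; simp [pow_succ, mul_assoc]
    have e2 : s * t * s = (t * s * t)⁻¹ := eq_inv_of_mul_eq_one_left e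
    rw [e2, mul_inv_rev, mul_inv_rev, htinv, hsinv]; group
  -- (rs)^5 = 1 consequences
  have hc5 : r * s * r * s * r = s * r * s * r * s := by
    have e : (r * s * r * s * r) * (s * r * s * r * s) = 1 := by
      rw [← hrs5]; simp [pow_succ, mul_assoc]
    have e2 : r * s * r * s * r = (s * r * s * r * s)⁻¹ := eq_inv_of_mul_eq_one_left e
    rw [e2]; simp only [mul_inv_rev, hsinv, hrinv]; group
  have hts5 : t * s * t * s * t = s := by
    have e : (t * s * t * s * t) * s = 1 := by rw [← hts3]; simp [pow_succ, mul_assoc]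
    have e2 : t * s * t * s * t = s⁻¹ := eq_inv_of_mul_eq_one_left e
    rw [e2, hsinv]
  -- parametrized (right-associated) versions
  have htt_x : ∀ x : W, t * (t * x) = x := fun x => by rw [← mul_assoc, htt, one_mul]
  have hss_x : ∀ x : W, s * (s * x) = x := fun x => by rw [← mul_assoc, hss, one_mul]
  have hrr_x : ∀ x : W, r * (r * x) = x := fun x => by rw [← mul_assoc, hrr, one_mul]
  have htr_x : ∀ x : W, t * (r * x) = r * (t * x) := fun x => by
    rw [← mul_assoc, hcomm, mul_assoc]
  have hsts_e : s * (t * s) = t * (s * t) := by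
    have h := hsts; simpa only [mul_assoc] using h
  have hsts_x : ∀ x : W, s * (t * (s * x)) = t * (s * (t * x)) := fun x => by
    have h := congrArg (· * x) hsts; simpa only [mul_assoc] using h
  have hts5_x : ∀ x : W, t * (s * (t * (s * (t * x)))) = s * x := fun x => by
    have h := congrArg (· * x) hts5; simpa only [mul_assoc] using h
  have hc5_x : ∀ x : W, r * (s * (r * (s * (r * x)))) = s * (r * (s * (r * (s * x)))) :=
    fun x => by
    have h := congrArg (· * x) hc5; simpa only [mul_assoc] using h
  have hsr5_x : ∀ x : W,
      s * (r * (s * (r * (s * (r * (s * (r * (s * (r * x))))))))) = x := fun x => by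
    have h := congrArg (· * x) hsr5
    simpa only [pow_succ, pow_zero, one_mul, mul_assoc] using h
  have hrs5_x : ∀ x : W,
      r * (s * (r * (s * (r * (s * (r * (s * (r * (s * x))))))))) = x := fun x => by
    have h := congrArg (· * x) hrs5
    simpa only [pow_succ, pow_zero, one_mul, mul_assoc] using h
  have hmid_x : ∀ x : W,
      s * (r * (s * (r * (s * (r * (s * (r * (s * x)))))))) = r * x := fun x => by
    have h := hsr5_x (r * x)
    rwa [hrr_x] at h
  -- ω commutes with s
  have hωs : ω * s = s * ω := by
    rw [hω]
    simp only [mul_assoc]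
    rw [hsts_e]
    rw [htt_x (s * t)]
    rw [hsts_x (r * (t * (s * t)))]
    rw [htr_x (t * (s * t))]
    rw [htt_x (s * t)]
  have hωs' : ω⁻¹ * s = s * ω⁻¹ := by
    rw [inv_mul_eq_iff_eq_mul, ← mul_assoc, hωs, mul_inv_cancel_right]
  -- the 7-letter form of ω t ω⁻¹
  have hX7 : ω * t * ω⁻¹ = t * s * r * s * r * s * t := by
    rw [hω]
    simp only [mul_inv_rev, htinv, hsinv, hrinv, mul_assoc, htt_x]
    rw [hts5_x (r * (s * t))]
  -- conjugation power lemma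
  have hconj : ∀ (a x : W) (n : ℕ), (a * x * a⁻¹) ^ n = a * x ^ n * a⁻¹ := fun a x n => by
    rw [← MulAut.conj_apply, ← map_pow, MulAut.conj_apply]
  -- the two conjugation identities with g = t*r*s
  have Lg1 : (t * r * s) * t * (t * r * s)⁻¹ = r * s * r := by
    simp only [mul_inv_rev, htinv, hsinv, hrinv, mul_assoc]
    rw [hsts_x (r * t)]
    rw [htr_x t]
    rw [htt]
    rw [mul_one]
    rw [htr_x (t * (s * r))]
    rw [htt_x (s * r)]
  have Lg2 : ω * t * ω⁻¹ = (t * r * s) * r * (t * r * s)⁻¹ := by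
    rw [hX7]
    simp only [mul_inv_rev, htinv, hsinv, hrinv, mul_assoc]
    rw [hc5_x t]
  -- the lifted map
  set f : Fin 3 → W := ![ω * t * ω⁻¹, s, r * s * r] with hfdef
  have hX2 : (ω * t * ω⁻¹) * (ω * t * ω⁻¹) = 1 := by
    simp only [mul_assoc, inv_mul_cancel_left, htt_x, mul_inv_cancel]
  have hfs01 : ((ω * t * ω⁻¹) * s) ^ 3 = 1 := by
    have key : (ω * t * ω⁻¹) * s = ω * (t * s) * ω⁻¹ := by
      rw [mul_assoc (ω * t) ω⁻¹ s, hωs']; group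
    rw [key, hconj, hts3, mul_one, mul_inv_cancel]
  have hfs12 : (s * (r * s * r)) ^ 5 = 1 := by
    have key : s * (r * s * r) = (s * r) ^ 2 := by simp [pow_succ, mul_assoc]
    rw [key, ← pow_mul, show 2 * 5 = 5 * 2 from rfl, pow_mul, hsr5, one_pow]
  have hfs02 : ((ω * t * ω⁻¹) * (r * s * r)) ^ 2 = 1 := by
    rw [Lg2, ← Lg1]
    have key : ((t * r * s) * r * (t * r * s)⁻¹) * ((t * r * s) * t * (t * r * s)⁻¹)
        = (t * r * s) * (r * t) * (t * r * s)⁻¹ := by group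
    rw [key, hconj, hrt2, mul_one, mul_inv_cancel]
  have hf : CoxeterMatrix.IsLiftable CoxeterMatrix.H₃ f := by
    intro i j
    fin_cases i <;> fin_cases j
    · show ((ω * t * ω⁻¹) * (ω * t * ω⁻¹)) ^ 1 = 1
      rw [pow_one]; exact hX2
    · show ((ω * t * ω⁻¹) * s) ^ 3 = 1
      exact hfs01
    · show ((ω * t * ω⁻¹) * (r * s * r)) ^ 2 = 1
      exact hfs02
    · show (s * (ω * t * ω⁻¹)) ^ 3 = 1
      exact hswap _ _ 3 hfs01
    · show (s * s) ^ 1 = 1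
      rw [pow_one]; exact hss
    · show (s * (r * s * r)) ^ 5 = 1
      exact hfs12
    · show ((r * s * r) * (ω * t * ω⁻¹)) ^ 2 = 1
      exact hswap _ _ 2 hfs02
    · show ((r * s * r) * s) ^ 5 = 1
      exact hswap _ _ 5 hfs12
    · show ((r * s * r) * (r * s * r)) ^ 1 = 1
      rw [pow_one]
      simp only [mul_assoc, hrr_x, hss_x, hrr]
  set Φ : W →* W := cs.lift ⟨f, hf⟩ with hΦdef
  have hΦt : Φ t = ω * t * ω⁻¹ := by
    conv_lhs => rw [ht]
    exact cs.lift_apply_simple hf 0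
  have hΦs : Φ s = s := by
    conv_lhs => rw [hs]
    exact cs.lift_apply_simple hf 1
  have hΦr : Φ r = r * s * r := by
    conv_lhs => rw [hr]
    exact cs.lift_apply_simple hf 2
  -- Φ² on generators
  have hΦ2s : Φ (Φ s) = s := by rw [hΦs, hΦs]
  have hΦ2r : Φ (Φ r) = s * r * s := by
    rw [hΦr]
    simp only [map_mul, hΦr, hΦs]
    simp only [mul_assoc]
    rw [hc5_x (s * r)]
    rw [hss_x r]
    rw [hrr]
    rw [mul_one]
  have hΦ2t : Φ (Φ t) = t * s * t := by
    rw [hΦt, hX7]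
    simp only [map_mul, hΦr, hΦs, hΦt]
    rw [hX7]
    simp only [mul_assoc]
    rw [hmid_x (t * (s * (r * (s * (r * (s * t))))))]
    rw [htr_x (t * (s * (r * (s * (r * (s * t))))))]
    rw [htt_x (s * (r * (s * (r * (s * t)))))]
    rw [hrs5_x t]
  -- Φ⁴ = id on generators
  have h4s : Φ (Φ (Φ (Φ s))) = s := by rw [hΦs, hΦs, hΦs, hΦs]
  have h4r : Φ (Φ (Φ (Φ r))) = r := by
    rw [hΦ2r]
    simp only [map_mul]
    rw [hΦ2s, hΦ2r]
    simp only [mul_assoc]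
    rw [hss_x (r * (s * s)), hss, mul_one]
  have h4t : Φ (Φ (Φ (Φ t))) = t := by
    rw [hΦ2t]
    simp only [map_mul]
    rw [hΦ2t, hΦ2s]
    simp only [mul_assoc]
    rw [hts5_x (s * t)]
    rw [hss_x t]
  set Ψ : W →* W := Φ.comp (Φ.comp Φ) with hΨdef
  have h₁ : Ψ.comp Φ = MonoidHom.id W := by
    apply cs.ext_simple
    intro i
    simp only [MonoidHom.comp_apply, MonoidHom.id_apply, hΨdef]
    fin_cases i
    · show Φ (Φ (Φ (Φ (cs.simple 0)))) = cs.simple 0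
      rw [← ht]; exact h4t
    · show Φ (Φ (Φ (Φ (cs.simple 1)))) = cs.simple 1
      rw [← hs]; exact h4s
    · show Φ (Φ (Φ (Φ (cs.simple 2)))) = cs.simple 2
      rw [← hr]; exact h4r
  have h₂ : Φ.comp Ψ = MonoidHom.id W := by
    apply cs.ext_simple
    intro i
    simp only [MonoidHom.comp_apply, MonoidHom.id_apply, hΨdef]
    fin_cases i
    · show Φ (Φ (Φ (Φ (cs.simple 0)))) = cs.simple 0
      rw [← ht]; exact h4t
    · show Φ (Φ (Φ (Φ (cs.simple 1)))) = cs.simple 1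
      rw [← hs]; exact h4s
    · show Φ (Φ (Φ (Φ (cs.simple 2)))) = cs.simple 2
      rw [← hr]; exact h4r
  set φ : W ≃* W := MonoidHom.toMulEquiv Φ Ψ h₁ h₂ with hφdef
  have hφr : φ r = r * s * r := hΦr
  have hφs : φ s = s := hΦs
  have hφt : φ t = ω * t * ω⁻¹ := hΦt
  refine ⟨⟨φ, hφr, hφs, hφt⟩, ⟨cs.map φ, ?_, ?_, ?_⟩⟩
  · rw [cs.map_simple, ← hr]; exact hφr
  · rw [cs.map_simple, ← hs]; exact hφs
  · rw [cs.map_simple, ← ht]; exact hφt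
end

section
/- Let $\Gamma = (V,E)$ be a graph (simple, undirected) and let $\ell \colon P_2(V) \to \mathbb{N} \cup \{\infty\}$ be an edge-labelling with $E = \{e \mid 1 \neq \ell(e) \neq \infty\}$ arising from a Coxeter system $(W,S)$ via $\ell(\{x,y\}) = m_{xy}$, with $V = S$. Let $J = \{r,s\}$ be an edge of $S$. Then $J$ is flexible if and only if there is no chordfree circuit in $\Gamma(S)$ of length at least 4 containing both $r$ and $s$ as consecutive vertices. -/
namespace Stmt12

variable {B : Type*} (M : CoxeterMatrix B) (r s : B)

/-- `J^∞`: the vertices outside `J = {r,s}` having infinite order product with some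
element of `J` (`M x j = 0` encodes `m_{xj} = ∞`). -/
def JInf (x : B) : Prop := x ≠ r ∧ x ≠ s ∧ (M x r = 0 ∨ M x s = 0)

/-- Adjacency in the graph `𝒢_J` on `J^∞`: both endpoints lie in `J^∞`, are distinct,
and their product has finite order. -/
def JAdj (a b : B) : Prop := JInf M r s a ∧ JInf M r s b ∧ a ≠ b ∧ M a b ≠ 0

/-- `J = {r,s}` is flexible: for every `x ∈ J^∞`, some `j ∈ J` satisfies `m_{jl} = ∞`
for every `l` in the `J`-component (connected component of `𝒢_J`) of `x`. -/
def Flexible : Prop :=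
  ∀ x : B, JInf M r s x →
    ∃ j : B, (j = r ∨ j = s) ∧
      ∀ l : B, Relation.ReflTransGen (JAdj M r s) x l → M j l = 0

/-- There is a chordfree circuit in `Γ(S)` of length `n ≥ 4` containing the edge `{r,s}`
(with `r, s` consecutive): an injective `v : ZMod n → B` with consecutive vertices joined
by edges of `Γ(S)`, no other edges among its vertices, and `v i = r`, `v (i+1) = s`
for some `i`. -/
def ChordfreeCircuitThrough : Prop :=
  ∃ n : ℕ, 4 ≤ n ∧ ∃ v : ZMod n → B, Function.Injective v ∧
    (∀ i : ZMod n, M (v i) (v (i + 1)) ≠ 0) ∧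
    (∀ i j : ZMod n, v i ≠ v j → M (v i) (v j) ≠ 0 → j = i + 1 ∨ i = j + 1) ∧
    (∃ i : ZMod n, v i = r ∧ v (i + 1) = s)

section Aux

variable {M r s}

lemma jadj_symm : Symmetric (JAdj M r s) := by
  rintro a b ⟨ha, hb, hne, hm⟩
  exact ⟨hb, ha, hne.symm, by rwa [M.symmetric]⟩

lemma jinf_of_reach {x l : B} (hx : JInf M r s x)
    (h : Relation.ReflTransGen (JAdj M r s) x l) : JInf M r s l := by
  induction h with
  | refl => exact hx
  | tail _ hadj _ => exact hadj.2.1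

/-- Part A: a chordfree circuit through `{r,s}` prevents flexibility. -/
lemma notFlexible_of_circuit (hrs : r ≠ s) (hfin : M r s ≠ 0)
    (hc : ChordfreeCircuitThrough M r s) : ¬ Flexible M r s := by
  obtain ⟨n, hn, v, hinj, hedge, hchord, i, hir, his⟩ := hc
  haveI : NeZero n := ⟨by omega⟩
  set w : ℕ → B := fun t => v (i + (t : ℕ)) with hw
  have hw0 : w 0 = r := by simpa [hw] using hir
  have hw1 : w 1 = s := by simpa [hw] using his
  -- cast arithmetic helper
  have hmod : ∀ t u : ℕ, ((t : ZMod n) = (u : ZMod n)) ↔ t % n = u % n :=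
    fun t u => ZMod.natCast_eq_natCast_iff' t u n
  have hne : ∀ t u : ℕ, t < n → u < n → t ≠ u → w t ≠ w u := by
    intro t u ht hu htu heq
    have h1 : i + (t : ZMod n) = i + (u : ZMod n) := hinj heq
    have h2 : (t : ZMod n) = (u : ZMod n) := add_left_cancel h1
    rw [hmod] at h2
    rw [Nat.mod_eq_of_lt ht, Nat.mod_eq_of_lt hu] at h2
    exact htu h2
  have hwsucc : ∀ t : ℕ, w (t + 1) = v (i + (t : ℕ) + 1) := by
    intro t
    have : ((t + 1 : ℕ) : ZMod n) = (t : ℕ) + 1 := by push_cast; ring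
    simp only [hw, this, add_assoc]
  have hMr : ∀ t : ℕ, 2 ≤ t → t ≤ n - 2 → M (w t) r = 0 := by
    intro t h2 hn2
    by_contra h
    rw [← hw0] at h
    have hvne : w t ≠ w 0 := hne t 0 (by omega) (by omega) (by omega)
    have := hchord (i + (t : ℕ)) (i + ((0 : ℕ) : ZMod n)) hvne h
    rcases this with h' | h'
    · -- i = i + t + 1
      have h3 : ((0 : ℕ) : ZMod n) = ((t + 1 : ℕ) : ZMod n) := by
        push_cast
        push_cast at h'
        linear_combination h'
      rw [hmod, Nat.zero_mod, Nat.mod_eq_of_lt (by omega)] at h3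
      omega
    · -- i + t = i + 0 + 1
      have h3 : ((t : ℕ) : ZMod n) = ((1 : ℕ) : ZMod n) := by
        push_cast
        push_cast at h'
        linear_combination h'
      rw [hmod, Nat.mod_eq_of_lt (by omega), Nat.mod_eq_of_lt (by omega)] at h3
      omega
  have hMs : ∀ t : ℕ, 3 ≤ t → t ≤ n - 1 → M (w t) s = 0 := by
    intro t h3 hn1
    by_contra h
    rw [← hw1] at h
    have hvne : w t ≠ w 1 := hne t 1 (by omega) (by omega) (by omega)
    have := hchord (i + (t : ℕ)) (i + ((1 : ℕ) : ZMod n)) hvne h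
    rcases this with h' | h'
    · have h4 : ((0 : ℕ) : ZMod n) = ((t : ℕ) : ZMod n) := by
        push_cast
        push_cast at h'
        linear_combination h'
      rw [hmod, Nat.zero_mod, Nat.mod_eq_of_lt (by omega)] at h4
      omega
    · have h4 : ((t : ℕ) : ZMod n) = ((2 : ℕ) : ZMod n) := by
        push_cast
        push_cast at h'
        linear_combination h'
      rw [hmod, Nat.mod_eq_of_lt (by omega), Nat.mod_eq_of_lt (by omega)] at h4
      omega
  have hJInf : ∀ t : ℕ, 2 ≤ t → t ≤ n - 1 → JInf M r s (w t) := by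
    intro t h2 h1
    refine ⟨by rw [← hw0]; exact hne t 0 (by omega) (by omega) (by omega),
      by rw [← hw1]; exact hne t 1 (by omega) (by omega) (by omega), ?_⟩
    rcases le_or_gt t (n - 2) with h | h
    · exact Or.inl (hMr t h2 h)
    · exact Or.inr (hMs t (by omega) (by omega))
  have hAdj : ∀ t : ℕ, 2 ≤ t → t ≤ n - 2 → JAdj M r s (w t) (w (t + 1)) := by
    intro t h2 hn2
    refine ⟨hJInf t h2 (by omega), hJInf (t + 1) (by omega) (by omega),
      hne t (t + 1) (by omega) (by omega) (by omega), ?_⟩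
    rw [hwsucc]
    exact hedge (i + (t : ℕ))
  have hreach : ∀ t : ℕ, 2 ≤ t → t ≤ n - 1 →
      Relation.ReflTransGen (JAdj M r s) (w 2) (w t) := by
    intro t
    induction t with
    | zero => omega
    | succ t ih =>
      intro h2 h1
      rcases Nat.lt_or_ge 2 (t + 1) with h | h
      · exact Relation.ReflTransGen.tail (ih (by omega) (by omega)) (hAdj t (by omega) (by omega))
      · have : t + 1 = 2 := by omega
        rw [this]
  intro hF
  obtain ⟨j, hj, hall⟩ := hF (w 2) (hJInf 2 le_rfl (by omega))
  rcases hj with rfl | rfl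
  · have h0 := hall (w (n - 1)) (hreach (n - 1) (by omega) le_rfl)
    have he : M (w (n - 1)) (v (i + ((n - 1 : ℕ) : ZMod n) + 1)) ≠ 0 := hedge _
    have hcast : i + ((n - 1 : ℕ) : ZMod n) + 1 = i := by
      have : ((n - 1 : ℕ) : ZMod n) + 1 = 0 := by
        have : ((n - 1 + 1 : ℕ) : ZMod n) = ((0 : ℕ) : ZMod n) := by
          rw [hmod, Nat.zero_mod, show n - 1 + 1 = n by omega, Nat.mod_self]
        push_cast at this
        linear_combination this
      rw [add_assoc, this, add_zero]
    rw [hcast, hir] at he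
    rw [M.symmetric] at h0
    exact he h0
  · have h0 := hall (w 2) Relation.ReflTransGen.refl
    have he : M (w 1) (w 2) ≠ 0 := by
      rw [hwsucc 1]
      exact hedge (i + ((1 : ℕ) : ZMod n))
    rw [← hw1] at h0
    exact he h0

end Aux

/-- A "good path": a path in `𝒢_J` whose first vertex is `r`-finite and whose last
vertex is `s`-finite. -/
def Good (k : ℕ) (f : ℕ → B) : Prop :=
  (∀ t, t ≤ k → JInf M r s (f t)) ∧ (∀ t, t < k → JAdj M r s (f t) (f (t + 1))) ∧
  M r (f 0) ≠ 0 ∧ M s (f k) ≠ 0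

section PartB

variable {M r s}

lemma good_cut {k : ℕ} {f : ℕ → B} (h : Good M r s k f) (i e : ℕ) (he : 0 < e)
    (hie : i + e ≤ k)
    (hstep : i + e < k → JAdj M r s (f i) (f (i + e + 1)))
    (hend : i + e = k → f i = f k) :
    Good M r s (k - e) (fun t => if t ≤ i then f t else f (t + e)) := by
  obtain ⟨hJ, hC, hr0, hsk⟩ := h
  refine ⟨?_, ?_, ?_, ?_⟩
  · intro t ht
    dsimp only
    split
    · exact hJ t (by omega)
    · exact hJ (t + e) (by omega)
  · intro t ht
    dsimp only
    rcases lt_trichotomy t i with h1 | h1 | h1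
    · rw [if_pos (by omega), if_pos (by omega)]
      exact hC t (by omega)
    · subst h1
      rw [if_pos le_rfl, if_neg (by omega), show t + 1 + e = t + e + 1 by ring]
      exact hstep (by omega)
    · rw [if_neg (by omega), if_neg (by omega)]
      have : t + 1 + e = t + e + 1 := by ring
      rw [this]
      exact hC (t + e) (by omega)
  · dsimp only
    rw [if_pos (Nat.zero_le i)]
    exact hr0
  · dsimp only
    rcases le_or_gt (k - e) i with h1 | h1
    · rw [if_pos h1]
      have h2 : k - e = i := by omega
      have h3 : i + e = k := by omega
      rw [h2, hend h3]
      exact hsk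
    · rw [if_neg (by omega)]
      have : k - e + e = k := by omega
      rw [this]
      exact hsk

lemma exists_good (hnF : ¬ Flexible M r s) : ∃ k f, Good M r s k f := by
  simp only [Flexible, not_forall] at hnF
  obtain ⟨x, hx, hall⟩ := hnF
  push_neg at hall
  obtain ⟨a, hxa, hra⟩ := hall r (Or.inl rfl)
  obtain ⟨b, hxb, hsb⟩ := hall s (Or.inr rfl)
  have hsymm : ∀ {a b : B}, Relation.ReflTransGen (JAdj M r s) a b → Relation.ReflTransGen (JAdj M r s) b a :=
    fun h => (@Relation.ReflTransGen.stdSymm _ (JAdj M r s) ⟨fun _ _ h => jadj_symm h⟩).symm _ _ h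
  have hab : Relation.ReflTransGen (JAdj M r s) a b := (hsymm hxa).trans hxb
  have hpath : ∀ {a b : B}, Relation.ReflTransGen (JAdj M r s) a b →
      ∃ (k : ℕ) (f : ℕ → B), f 0 = a ∧ f k = b ∧ ∀ t, t < k → JAdj M r s (f t) (f (t + 1)) := by
    intro a b h
    induction h with
    | refl => exact ⟨0, fun _ => a, rfl, rfl, by omega⟩
    | @tail b c _ hbc ih =>
      obtain ⟨k, f, h0, hk, hch⟩ := ih
      refine ⟨k + 1, fun t => if t ≤ k then f t else c, by simp [h0],
        by dsimp only; rw [if_neg (by omega)], ?_⟩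
      intro t ht
      dsimp only
      rcases lt_trichotomy t k with h1 | h1 | h1
      · rw [if_pos (by omega), if_pos (by omega)]
        exact hch t h1
      · subst h1
        rw [if_pos le_rfl, if_neg (by omega), hk]
        exact hbc
      · omega
  obtain ⟨k, f, h0, hk, hch⟩ := hpath hab
  have hbJ : JInf M r s b := jinf_of_reach hx hxb
  refine ⟨k, f, ?_, hch, by rwa [h0], by rwa [hk]⟩
  intro t ht
  rcases lt_or_eq_of_le ht with h1 | h1
  · exact (hch t h1).1
  · rw [h1, hk]; exact hbJ

/-- Part B: no flexibility gives a chordfree circuit. -/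
lemma circuit_of_notFlexible (hrs : r ≠ s) (hfin : M r s ≠ 0)
    (hnF : ¬ Flexible M r s) : ChordfreeCircuitThrough M r s := by
  classical
  have hex : ∃ k, ∃ f, Good M r s k f := exists_good hnF
  obtain ⟨f, hf⟩ := Nat.find_spec hex
  set k0 := Nat.find hex with hk0
  have hmin : ∀ k' < k0, ¬∃ g, Good M r s k' g := fun k' h => Nat.find_min hex h
  obtain ⟨hJ, hC, hr0, hsk⟩ := hf
  -- k0 ≥ 1
  have hk1 : 1 ≤ k0 := by
    by_contra h
    have h0 : k0 = 0 := by omega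
    rcases (hJ 0 (by omega)).2.2 with hz | hz
    · rw [M.symmetric] at hz; exact hr0 hz
    · rw [M.symmetric] at hz; rw [h0] at hsk; exact hsk hz
  -- injectivity
  have hinjf : ∀ a b, a < b → b ≤ k0 → f a ≠ f b := by
    intro a b hab hbk heq
    have hcut := good_cut ⟨hJ, hC, hr0, hsk⟩ a (b - a) (by omega) (by omega)
      (fun h => by
        have : a + (b - a) + 1 = b + 1 := by omega
        rw [this, heq]
        exact hC b (by omega))
      (fun h => by
        have : b = k0 := by omega
        rw [heq, this])
    exact hmin (k0 - (b - a)) (by omega) ⟨_, hcut⟩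
  -- no chords in the path
  have hchf : ∀ a b, a + 2 ≤ b → b ≤ k0 → M (f a) (f b) = 0 := by
    intro a b hab hbk
    by_contra h
    have hadj : JAdj M r s (f a) (f b) :=
      ⟨hJ a (by omega), hJ b hbk, hinjf a b (by omega) hbk, h⟩
    have hcut := good_cut ⟨hJ, hC, hr0, hsk⟩ a (b - a - 1) (by omega) (by omega)
      (fun _ => by
        have : a + (b - a - 1) + 1 = b := by omega
        rw [this]
        exact hadj)
      (fun h' => by omega)
    exact hmin (k0 - (b - a - 1)) (by omega) ⟨_, hcut⟩
  -- r is far from interior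
  have hrf : ∀ t, 1 ≤ t → t ≤ k0 → M r (f t) = 0 := by
    intro t h1 hk
    by_contra h
    refine hmin (k0 - t) (by omega) ⟨fun u => f (u + t), ?_, ?_, ?_, ?_⟩
    · intro u hu; exact hJ (u + t) (by omega)
    · intro u hu
      show JAdj M r s (f (u + t)) (f (u + 1 + t))
      rw [show u + 1 + t = u + t + 1 by ring]
      exact hC (u + t) (by omega)
    · simpa using h
    · show M s (f (k0 - t + t)) ≠ 0
      rw [show k0 - t + t = k0 by omega]
      exact hsk
  -- s is far from interior
  have hsf : ∀ t, t < k0 → M s (f t) = 0 := by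
    intro t ht
    by_contra h
    exact hmin t ht ⟨f, fun u hu => hJ u (by omega), fun u hu => hC u (by omega), hr0, h⟩
  -- build the circuit
  set n := k0 + 3 with hn
  haveI : NeZero n := ⟨by omega⟩
  haveI : Fact (1 < n) := ⟨by omega⟩
  set w : ℕ → B := fun m => if m = 0 then r else if m = 1 then s else f (k0 + 2 - m) with hwdef
  have hw0 : w 0 = r := rfl
  have hw1 : w 1 = s := rfl
  have hwge : ∀ m, 2 ≤ m → w m = f (k0 + 2 - m) := by
    intro m hm
    simp only [hwdef]
    rw [if_neg (by omega), if_neg (by omega)]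
  have hfner : ∀ p, p ≤ k0 → f p ≠ r := fun p hp => (hJ p hp).1
  have hfnes : ∀ p, p ≤ k0 → f p ≠ s := fun p hp => (hJ p hp).2.1
  have hwinj : ∀ a b, a < n → b < n → w a = w b → a = b := by
    intro a b ha hb heq
    rcases Nat.lt_or_ge a 2 with h1 | h1 <;> rcases Nat.lt_or_ge b 2 with h2 | h2
    · interval_cases a <;> interval_cases b
      · rfl
      · rw [hw0, hw1] at heq; exact absurd heq hrs
      · rw [hw0, hw1] at heq; exact absurd heq.symm hrs
      · rfl
    · rw [hwge b h2] at heq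
      interval_cases a
      · exact absurd heq.symm (hfner _ (by omega))
      · exact absurd heq.symm (hfnes _ (by omega))
    · rw [hwge a h1] at heq
      interval_cases b
      · exact absurd heq (hfner _ (by omega))
      · exact absurd heq (hfnes _ (by omega))
    · rw [hwge a h1, hwge b h2] at heq
      rcases lt_trichotomy (k0 + 2 - a) (k0 + 2 - b) with h3 | h3 | h3
      · exact absurd heq (hinjf _ _ h3 (by omega))
      · omega
      · exact absurd heq.symm (hinjf _ _ h3 (by omega))
  set v : ZMod n → B := fun t => w t.val with hvdef
  have hvalsucc : ∀ t : ZMod n, (t + 1).val = (t.val + 1) % n := by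
    intro t
    rw [ZMod.val_add, ZMod.val_one]
  have hvlt : ∀ t : ZMod n, t.val < n := fun t => ZMod.val_lt t
  -- edges
  have hedgeN : ∀ m, m < n → M (w m) (w ((m + 1) % n)) ≠ 0 := by
    intro m hm
    rcases Nat.lt_or_ge m 2 with h1 | h1
    · interval_cases m
      · rw [show (0 + 1) % n = 1 from Nat.mod_eq_of_lt (by omega), hw0, hw1]
        exact hfin
      · rw [show (1 + 1) % n = 2 from Nat.mod_eq_of_lt (by omega), hw1, hwge 2 (by omega)]
        rw [show k0 + 2 - 2 = k0 by omega]
        exact hsk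
    · rcases Nat.lt_or_ge m (n - 1) with h2 | h2
      · rw [show (m + 1) % n = m + 1 from Nat.mod_eq_of_lt (by omega), hwge m h1,
          hwge (m + 1) (by omega)]
        have hadj := hC (k0 + 1 - m) (by omega)
        rw [show k0 + 1 - m + 1 = k0 + 2 - m by omega] at hadj
        rw [show k0 + 2 - (m + 1) = k0 + 1 - m by omega, M.symmetric]
        exact hadj.2.2.2
      · have hm' : m = k0 + 2 := by omega
        rw [hm', show (k0 + 2 + 1) % n = 0 by rw [show k0 + 2 + 1 = n from rfl, Nat.mod_self],
          hwge _ (by omega), hw0]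
        rw [show k0 + 2 - (k0 + 2) = 0 by omega, M.symmetric]
        exact hr0
  -- chords (nat version, a < b)
  have hchordN : ∀ a b, a < b → b < n → M (w a) (w b) ≠ 0 →
      b = a + 1 ∨ (a = 0 ∧ b = k0 + 2) := by
    intro a b hab hbn hne0
    rcases Nat.lt_or_ge a 2 with h1 | h1
    · interval_cases a
      · rcases Nat.lt_or_ge b 2 with h2 | h2
        · left; omega
        · rw [hw0, hwge b h2] at hne0
          rcases Nat.lt_or_ge b (k0 + 2) with h3 | h3
          · exact absurd (hrf (k0 + 2 - b) (by omega) (by omega)) hne0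
          · right; omega
      · rw [hw1, hwge b (by omega)] at hne0
        rcases Nat.lt_or_ge b 3 with h3 | h3
        · left; omega
        · exact absurd (hsf (k0 + 2 - b) (by omega)) hne0
    · rw [hwge a h1, hwge b (by omega)] at hne0
      rcases Nat.lt_or_ge (b - a) 2 with h3 | h3
      · left; omega
      · rw [M.symmetric] at hne0
        exact absurd (hchf (k0 + 2 - b) (k0 + 2 - a) (by omega) (by omega)) hne0
  -- lift to ZMod
  have hsucc_iff : ∀ t u : ZMod n, u = t + 1 ↔ u.val = (t.val + 1) % n := by
    intro t u
    constructor
    · intro h; rw [h, hvalsucc]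
    · intro h
      have := hvalsucc t
      exact ZMod.val_injective n (by rw [h, this])
  refine ⟨n, by omega, v, ?_, ?_, ?_, ?_⟩
  · intro t u h
    exact ZMod.val_injective n (hwinj _ _ (hvlt t) (hvlt u) h)
  · intro t
    have := hedgeN t.val (hvlt t)
    simpa [hvdef, hvalsucc t] using this
  · intro t u hvne hne0
    have hab : t.val ≠ u.val := by
      intro h
      exact hvne (by simp [hvdef, h])
    rcases lt_trichotomy t.val u.val with h1 | h1 | h1
    · rcases hchordN t.val u.val h1 (hvlt u) hne0 with h2 | ⟨h2, h3⟩
      · left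
        rw [hsucc_iff, Nat.mod_eq_of_lt (by have := hvlt u; omega)]
        omega
      · right
        rw [hsucc_iff, show u.val + 1 = n by have := hvlt u; omega, Nat.mod_self]
        omega
    · omega
    · have hne0' : M (w u.val) (w t.val) ≠ 0 := by rwa [M.symmetric] at hne0
      rcases hchordN u.val t.val h1 (hvlt t) hne0' with h2 | ⟨h2, h3⟩
      · right
        rw [hsucc_iff, Nat.mod_eq_of_lt (by have := hvlt t; omega)]
        omega
      · left
        rw [hsucc_iff, show t.val + 1 = n by have := hvlt t; omega, Nat.mod_self]
        omega
  · refine ⟨0, ?_, ?_⟩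
    · simp [hvdef, hw0]
    · rw [zero_add]
      have : (1 : ZMod n).val = 1 := ZMod.val_one n
      simp [hvdef, this, hw1]

end PartB

/-- Let `(W,S)` arise from a Coxeter matrix `M` and let `J = {r,s}` be an
edge of `S` (so `r ≠ s` and `m_{rs}` is finite). Then `J` is flexible if and only if
there is no chordfree circuit of length at least 4 in `Γ(S)` containing `r, s` as
consecutive vertices. -/
theorem flexible_iff_no_chordfree_circuit (hrs : r ≠ s) (hfin : M r s ≠ 0) :
    Flexible M r s ↔ ¬ ChordfreeCircuitThrough M r s := by
  constructor
  · intro hF hc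
    exact notFlexible_of_circuit hrs hfin hc hF
  · intro hnc
    by_contra hnF
    exact hnc (circuit_of_notFlexible hrs hfin hnF)

end Stmt12
end

section
/- Let $(W,S)$ be a Coxeter system of finite rank and let $\alpha \colon W \to W$ be a surjective group homomorphism. Suppose there is a family $\mathbf{K}$ of subsets of $S$ such that: (1) every $K \in \mathbf{K}$ generates a finite subgroup of $W$; (2) for each $K \in \mathbf{K}$, the restriction of $\alpha$ to $\langle K \rangle$ is an automorphism of $\langle K \rangle$; (3) for each $s \in S$ there exist $K \in \mathbf{K}$ and $w_s \in \langle K \rangle$ with $\alpha(s) = w_s\, s\, w_s^{-1}$. Then $\alpha$ is an automorphism of $W$ of finite order. -/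
/-- Let `(W,S)` be a Coxeter system of finite rank and `α : W → W` a
surjective homomorphism. Suppose there is a family `Ks` of subsets of `S` such that:
(1) each `⟨K⟩` is finite; (2) `α` restricts to a bijection of `⟨K⟩` for each `K ∈ Ks`;
(3) each simple reflection is mapped by `α` to a conjugate of itself by some element of
some `⟨K⟩`, `K ∈ Ks`. Then `α` is an automorphism of `W` of finite order. -/
theorem aut_of_finite_order_of_spherical_family {B : Type*} [Finite B]
    {W : Type*} [Group W] {M : CoxeterMatrix B} (cs : CoxeterSystem M W)
    (α : W →* W) (hsurj : Function.Surjective α)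
    (Ks : Set (Set B))
    (h1 : ∀ K ∈ Ks, ((Subgroup.closure (cs.simple '' K) : Subgroup W) : Set W).Finite)
    (h2 : ∀ K ∈ Ks, Set.BijOn α
      ((Subgroup.closure (cs.simple '' K) : Subgroup W) : Set W)
      ((Subgroup.closure (cs.simple '' K) : Subgroup W) : Set W))
    (h3 : ∀ i : B, ∃ K ∈ Ks, ∃ w ∈ Subgroup.closure (cs.simple '' K),
      α (cs.simple i) = w * cs.simple i * w⁻¹) :
    Function.Bijective α ∧ ∃ n : ℕ, 0 < n ∧ ∀ g : W, (⇑α)^[n] g = g := by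
  classical
  -- Step 1: for each simple reflection, some positive iterate of α fixes it.
  have key : ∀ i : B, ∃ n : ℕ, 0 < n ∧ (⇑α)^[n] (cs.simple i) = cs.simple i := by
    intro i
    obtain ⟨K, hK, w, hw, heq⟩ := h3 i
    set G : Subgroup W := Subgroup.closure (cs.simple '' K) with hG
    have hfin : (G : Set W).Finite := h1 K hK
    have hbij : Set.BijOn α (G : Set W) (G : Set W) := h2 K hK
    haveI : Finite (G : Set W) := hfin
    -- the affine map x ↦ α x * w on G
    have hmem : ∀ x : G, α (x : W) * w ∈ G := fun x =>
      G.mul_mem (hbij.mapsTo x.2) hw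
    let f : G → G := fun x => ⟨α (x : W) * w, hmem x⟩
    have hfinj : Function.Injective f := by
      intro x y hxy
      have : α (x : W) * w = α (y : W) * w := congrArg Subtype.val hxy
      have : α (x : W) = α (y : W) := mul_right_cancel this
      exact Subtype.ext (hbij.injOn x.2 y.2 this)
    have hfbij : Function.Bijective f := Finite.injective_iff_bijective.mp hfinj
    let e : Equiv.Perm G := Equiv.ofBijective f hfbij
    haveI : Finite (Equiv.Perm G) := inferInstance
    have hord : 0 < orderOf e := orderOf_pos e
    -- conjugating element after m steps
    have hconj : ∀ m : ℕ, (⇑α)^[m] (cs.simple i) =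
        ((⇑e)^[m] (1 : G) : W) * cs.simple i * ((⇑e)^[m] (1 : G) : W)⁻¹ := by
      intro m
      induction m with
      | zero => simp
      | succ m ih =>
        rw [Function.iterate_succ_apply', Function.iterate_succ_apply', ih]
        have he : ((⇑e) ((⇑e)^[m] (1 : G)) : W) = α (((⇑e)^[m] (1 : G) : G) : W) * w := rfl
        simp only [map_mul, map_inv, heq, he]
        group
    refine ⟨orderOf e, hord, ?_⟩
    have : (⇑e)^[orderOf e] (1 : G) = (1 : G) := by
      have : e ^ orderOf e = 1 := pow_orderOf_eq_one e
      have h2 : (⇑(e ^ orderOf e)) (1 : G) = (1 : G) := by rw [this]; rfl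
      rwa [Equiv.Perm.coe_pow] at h2
    rw [hconj, this]
    simp
  -- Step 2: combine over all i.
  haveI : Fintype B := Fintype.ofFinite B
  choose n hn hfix using key
  set N : ℕ := ∏ i : B, n i with hN
  have hNpos : 0 < N := Finset.prod_pos fun i _ => hn i
  have hNfix : ∀ i : B, (⇑α)^[N] (cs.simple i) = cs.simple i := by
    intro i
    obtain ⟨k, hk⟩ : n i ∣ N := Finset.dvd_prod_of_mem n (Finset.mem_univ i)
    rw [hk, Function.iterate_mul]
    exact Function.iterate_fixed (hfix i) k
  -- α^[N] = id as a monoid hom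
  set β : Monoid.End W := α with hβ
  have hpow : (⇑α)^[N] = ⇑(β ^ N) := rfl
  have hend : (β ^ N : Monoid.End W) = MonoidHom.id W := by
    apply cs.ext_simple
    intro i
    show (β ^ N) (cs.simple i) = cs.simple i
    exact hNfix i
  have hid : ∀ g : W, (⇑α)^[N] g = g := by
    intro g
    rw [hpow, hend]
    rfl
  have hinj : Function.Injective α := by
    have : Function.LeftInverse ((⇑α)^[N - 1]) α := by
      intro g
      have : (⇑α)^[N - 1] (α g) = (⇑α)^[N] g := by
        rw [← Function.iterate_succ_apply, Nat.succ_eq_add_one,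
          Nat.sub_add_cancel hNpos]
      rw [this, hid]
    exact this.injective
  exact ⟨⟨hinj, hsurj⟩, N, hNpos, hid⟩
end
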